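/- The value V(π/2) = 2π ∫₀^{π/2} ∫_{−π/2}^{π/2} τ · sin(τ cos v) dv dτ satisfies 13.7453 < V(π/2) < 13.7455. (This is the volume Vol(B(R₃)) ≈ 13.74539472 of the ball of radius R₃ = π/2 in equation (2.11) of the paper.) -/

import Mathlib

/-!
The Taylor polynomials of `sin` alternately over- and underestimate it on `[0, ∞)`: starting from
`cos ≤ 1`, each integration from `0` flips the sign of the remainder. For `τ ≥ 0` and
`v ∈ [-π/2, π/2]` the argument `τ cos v` is nonnegative, so replacing `sin` by its Taylor polynomials
of degrees 9 and 11 brackets `V(π/2)`. After the substitution `v ↦ v + π/2` the inner integrals of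
`cos v ^ (2k+1)` are the Wallis integrals `∫₀^π sin ^ (2k+1)`, so both brackets are explicit
polynomials in `π`, and `3.141592 < π < 3.141593` separates them from the two constants.
-/

open Real

/-- The volume of the geodesic ball of radius `ρ` in `S² × ℝ` geometry
(Theorem 2.4 of the paper). -/
noncomputable def ballVol (ρ : ℝ) : ℝ :=
  2 * π * ∫ τ in (0 : ℝ)..ρ, ∫ v in (-(π / 2))..(π / 2), τ * Real.sin (τ * Real.cos v)

open intervalIntegral Finset
open scoped Nat

noncomputable def sinTaylor (n : ℕ) (x : ℝ) : ℝ :=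
  ∑ k ∈ range n, (-1) ^ k * x ^ (2 * k + 1) / (2 * k + 1)!

noncomputable def cosTaylor (n : ℕ) (x : ℝ) : ℝ :=
  ∑ k ∈ range n, (-1) ^ k * x ^ (2 * k) / (2 * k)!

theorem continuous_sinTaylor (n : ℕ) : Continuous (sinTaylor n) := by
  unfold sinTaylor
  fun_prop

theorem hasDerivAt_sinTaylor (n : ℕ) (x : ℝ) :
    HasDerivAt (sinTaylor n) (cosTaylor n x) x := by
  unfold sinTaylor cosTaylor
  refine (HasDerivAt.fun_sum fun k _ => ((hasDerivAt_pow _ x).const_mul _).div_const _).congr_deriv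
    (sum_congr rfl fun k _ => ?_)
  rw [Nat.factorial_succ]
  push_cast
  field_simp

theorem hasDerivAt_cosTaylor_succ (n : ℕ) (x : ℝ) :
    HasDerivAt (cosTaylor (n + 1)) (-sinTaylor n x) x := by
  have hshift : cosTaylor (n + 1) =
      fun y => ∑ k ∈ range n, (-1 : ℝ) ^ (k + 1) * y ^ (2 * k + 2) / (2 * k + 2)! + 1 := by
    funext y
    simp [cosTaylor, sum_range_succ', mul_add]
  rw [hshift, sinTaylor, ← sum_neg_distrib]
  refine ((HasDerivAt.fun_sum fun k _ =>
    ((hasDerivAt_pow _ x).const_mul _).div_const _).add_const 1).congr_deriv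
    (sum_congr rfl fun k _ => ?_)
  rw [show 2 * k + 2 = (2 * k + 1) + 1 by ring, Nat.factorial_succ]
  push_cast
  field_simp
  ring

theorem nonneg_of_hasDerivAt_nonneg {f f' : ℝ → ℝ} (hf : ∀ x, HasDerivAt f (f' x) x)
    (h₀ : f 0 = 0) (hf' : ∀ x, 0 ≤ x → 0 ≤ f' x) {x : ℝ} (hx : 0 ≤ x) : 0 ≤ f x := by
  have hmono : MonotoneOn f (Set.Ici 0) :=
    monotoneOn_of_hasDerivWithinAt_nonneg (convex_Ici 0)
      (fun y _ => (hf y).continuousAt.continuousWithinAt) (fun y _ => (hf y).hasDerivWithinAt)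
      (fun y hy => hf' y (interior_subset hy))
  simpa [h₀] using hmono Set.self_mem_Ici hx hx

theorem sinTaylor_sub_sin_alternating_of_cos {n : ℕ}
    (hcos : ∀ y, 0 ≤ y → 0 ≤ (-1) ^ n * (cosTaylor (n + 1) y - cos y)) {x : ℝ} (hx : 0 ≤ x) :
    0 ≤ (-1) ^ n * (sinTaylor (n + 1) x - sin x) :=
  nonneg_of_hasDerivAt_nonneg
    (fun y => ((hasDerivAt_sinTaylor _ y).sub (hasDerivAt_sin y)).const_mul _)
    (by simp [sinTaylor]) hcos hx

theorem cosTaylor_sub_cos_alternating (n : ℕ) {x : ℝ} (hx : 0 ≤ x) :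
    0 ≤ (-1) ^ n * (cosTaylor (n + 1) x - cos x) := by
  induction n generalizing x with
  | zero => simpa [cosTaylor] using cos_le_one x
  | succ n ih =>
    refine nonneg_of_hasDerivAt_nonneg
      (fun y => ((hasDerivAt_cosTaylor_succ _ y).sub (hasDerivAt_cos y)).const_mul _)
      (by simp [cosTaylor, sum_range_succ']) (fun y hy => ?_) hx
    have hsin := sinTaylor_sub_sin_alternating_of_cos (fun y hy => ih hy) hy
    rw [pow_succ]
    linarith

theorem sin_le_sinTaylor_of_even {n : ℕ} (hn : Even n) {x : ℝ} (hx : 0 ≤ x) :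
    sin x ≤ sinTaylor (n + 1) x := by
  have h := sinTaylor_sub_sin_alternating_of_cos (fun _ => cosTaylor_sub_cos_alternating n) hx
  rw [hn.neg_one_pow, one_mul] at h
  linarith

theorem sinTaylor_le_sin_of_odd {n : ℕ} (hn : Odd n) {x : ℝ} (hx : 0 ≤ x) :
    sinTaylor (n + 1) x ≤ sin x := by
  have h := sinTaylor_sub_sin_alternating_of_cos (fun _ => cosTaylor_sub_cos_alternating n) hx
  rw [hn.neg_one_pow] at h
  linarith

noncomputable def ballVolWith (f : ℝ → ℝ) (ρ : ℝ) : ℝ :=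
  2 * π * ∫ τ in (0 : ℝ)..ρ, ∫ v in (-(π / 2))..(π / 2), τ * f (τ * cos v)

theorem ballVol_eq_ballVolWith_sin (ρ : ℝ) : ballVol ρ = ballVolWith sin ρ := rfl

theorem ballVolWith_mono {f g : ℝ → ℝ} (hf : Continuous f) (hg : Continuous g)
    (hfg : ∀ x, 0 ≤ x → f x ≤ g x) {ρ : ℝ} (hρ : 0 ≤ ρ) : ballVolWith f ρ ≤ ballVolWith g ρ := by
  refine mul_le_mul_of_nonneg_left (integral_mono_on hρ ?_ ?_ fun τ hτ => ?_) (by positivity)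
  · exact (by fun_prop : Continuous fun τ => ∫ v in (-(π / 2))..(π / 2), τ * f (τ * cos v)
      ).intervalIntegrable _ _
  · exact (by fun_prop : Continuous fun τ => ∫ v in (-(π / 2))..(π / 2), τ * g (τ * cos v)
      ).intervalIntegrable _ _
  refine integral_mono_on (by linarith [pi_pos]) (by apply Continuous.intervalIntegrable; fun_prop)
    (by apply Continuous.intervalIntegrable; fun_prop) fun v hv => ?_
  exact mul_le_mul_of_nonneg_left (hfg _ (mul_nonneg hτ.1 (cos_nonneg_of_mem_Icc hv))) hτ.1

theorem integral_cos_pow_eq_integral_sin_pow (m : ℕ) :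
    ∫ v in (-(π / 2))..(π / 2), cos v ^ m = ∫ x in 0..π, sin x ^ m := by
  simp_rw [← sin_add_pi_div_two, integral_comp_add_right (fun x => sin x ^ m)]
  ring_nf

theorem ballVolWith_sinTaylor (n : ℕ) (ρ : ℝ) :
    ballVolWith (sinTaylor n) ρ = 2 * π * ∑ k ∈ range n,
      (-1) ^ k * (2 * ∏ i ∈ range k, (2 * (i : ℝ) + 2) / (2 * i + 3)) / (2 * k + 1)!
        * (ρ ^ (2 * k + 3) / (2 * k + 3)) := by
  have inner (τ : ℝ) : ∫ v in (-(π / 2))..(π / 2), τ * sinTaylor n (τ * cos v) =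
      ∑ k ∈ range n, (-1) ^ k * (2 * ∏ i ∈ range k, (2 * (i : ℝ) + 2) / (2 * i + 3))
        / (2 * k + 1)! * τ ^ (2 * k + 2) := by
    simp_rw [sinTaylor, mul_sum]
    rw [integral_finsetSum fun k _ => by apply Continuous.intervalIntegrable; fun_prop]
    refine sum_congr rfl fun k _ => ?_
    have hterm : ∀ v, τ * ((-1) ^ k * (τ * cos v) ^ (2 * k + 1) / (2 * k + 1)!) =
        (-1) ^ k * τ ^ (2 * k + 2) / (2 * k + 1)! * cos v ^ (2 * k + 1) := fun v => by ring
    simp_rw [hterm, integral_const_mul, integral_cos_pow_eq_integral_sin_pow, integral_sin_pow_odd]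
    ring
  rw [ballVolWith]
  simp_rw [inner]
  rw [integral_finsetSum fun k _ => by apply Continuous.intervalIntegrable; fun_prop]
  simp_rw [integral_const_mul, integral_pow]
  congr 1
  refine sum_congr rfl fun k _ => ?_
  push_cast
  ring

theorem pi_pow_bounds {k : ℕ} (hk : k ≠ 0) :
    (3.141592 : ℝ) ^ k < π ^ k ∧ π ^ k < (3.141593 : ℝ) ^ k :=
  ⟨pow_lt_pow_left₀ pi_gt_d6 (by norm_num) hk, pow_lt_pow_left₀ pi_lt_d6 pi_pos.le hk⟩

theorem ballVolWith_sinTaylor_five_lt : ballVolWith (sinTaylor 5) (π / 2) < 13.7455 := by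
  rw [ballVolWith_sinTaylor]
  norm_num [sum_range_succ, prod_range_succ, Nat.factorial]
  linarith [(pi_pow_bounds (k := 4) (by norm_num)).2, (pi_pow_bounds (k := 6) (by norm_num)).1,
    (pi_pow_bounds (k := 8) (by norm_num)).2, (pi_pow_bounds (k := 10) (by norm_num)).1,
    (pi_pow_bounds (k := 12) (by norm_num)).2]

theorem lt_ballVolWith_sinTaylor_six : 13.7453 < ballVolWith (sinTaylor 6) (π / 2) := by
  rw [ballVolWith_sinTaylor]
  norm_num [sum_range_succ, prod_range_succ, Nat.factorial]
  linarith [(pi_pow_bounds (k := 4) (by norm_num)).1, (pi_pow_bounds (k := 6) (by norm_num)).2,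
    (pi_pow_bounds (k := 8) (by norm_num)).1, (pi_pow_bounds (k := 10) (by norm_num)).2,
    (pi_pow_bounds (k := 12) (by norm_num)).1, (pi_pow_bounds (k := 14) (by norm_num)).2]

/-- The volume of the ball of radius `R₃ = π/2` (equation (2.11) of the paper):
`Vol(B(R₃)) ≈ 13.74539472`. -/
theorem ballVol_pi_div_two_bounds :
    13.7453 < ballVol (π / 2) ∧ ballVol (π / 2) < 13.7455 := by
  have hρ : 0 ≤ π / 2 := by positivity
  rw [ballVol_eq_ballVolWith_sin]
  constructor
  · calc (13.7453 : ℝ) < ballVolWith (sinTaylor 6) (π / 2) := lt_ballVolWith_sinTaylor_six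
      _ ≤ ballVolWith sin (π / 2) :=
        ballVolWith_mono (continuous_sinTaylor 6) continuous_sin
          (fun _ => sinTaylor_le_sin_of_odd (by decide)) hρ
  · calc ballVolWith sin (π / 2) ≤ ballVolWith (sinTaylor 5) (π / 2) :=
        ballVolWith_mono continuous_sin (continuous_sinTaylor 5)
          (fun _ => sin_le_sinTaylor_of_even (by decide)) hρ
      _ < 13.7455 := ballVolWith_sinTaylor_five_lt
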